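/- arXiv:quant-ph/0510098 — 2 statements merged into one kernel-verified Lean document; each statement's English description precedes it below -/
import Mathlib

section
/- Let ρ, A : ℝ×ℝ → ℂ be smooth, 2π-periodic in each variable, with A(φ,φ) = 1 for all φ and (1/(2π)) ∫₀^{2π} ρ(φ,φ) dφ = 1. Suppose the asymptotic characteristic function h(φ) = −i ∂₁A(φ,φ) is a constant real number c. Define M₁(n) = (1/(2πi)) ∫₀^{2π} [∂_φ (ρ(φ,φ')A(φ,φ')ⁿ)]_{φ'=φ} dφ and M₂(n) = (1/(2πi²)) ∫₀^{2π} [∂_φ² (ρ(φ,φ')A(φ,φ')ⁿ)]_{φ'=φ} dφ. Then there exists a constant K₃ ∈ ℂ, independent of n, such that for all natural numbers n, M₂(n) − M₁(n)² = K₃·n + (M₂(0) − M₁(0)²); i.e. the quadratic term in the variance vanishes and the walk spreads classically. -/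
open MeasureTheory Real intervalIntegral

noncomputable def pd (f : ℝ × ℝ → ℂ) : ℝ × ℝ → ℂ := fun p => fderiv ℝ f p (1, 0)

lemma pd_contDiff {f : ℝ × ℝ → ℂ} (hf : ContDiff ℝ (⊤ : ℕ∞) f) : ContDiff ℝ (⊤ : ℕ∞) (pd f) :=
  (hf.fderiv_right (by simp)).clm_apply contDiff_const

lemma hasDerivAt_slice {f : ℝ × ℝ → ℂ} (hf : ContDiff ℝ (⊤ : ℕ∞) f) (y x : ℝ) :
    HasDerivAt (fun t => f (t, y)) (pd f (x, y)) x := by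
  have h1 : HasDerivAt (fun t : ℝ => (t, y)) ((1:ℝ), (0:ℝ)) x :=
    (hasDerivAt_id x).prodMk (hasDerivAt_const x y)
  exact ((hf.differentiable (by simp) (x, y)).hasFDerivAt).comp_hasDerivAt x h1

lemma cont_diag {f : ℝ × ℝ → ℂ} (hf : Continuous f) :
    Continuous fun φ : ℝ => f (φ, φ) :=
  hf.comp (continuous_id.prodMk continuous_id)

lemma HasDerivAt.npow {f : ℝ → ℂ} {f' : ℂ} {x : ℝ} (hf : HasDerivAt f f' x) (n : ℕ) :
    HasDerivAt (fun t => f t ^ n) ((n : ℂ) * f x ^ (n - 1) * f') x := by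
  induction n with
  | zero => simpa using hasDerivAt_const x (1 : ℂ)
  | succ m ih =>
    have h2 : HasDerivAt (fun t => f t ^ m * f t) (↑(m + 1) * f x ^ (m + 1 - 1) * f') x := by
      convert (show HasDerivAt (fun t => f t ^ m * f t) _ x from ih.mul hf) using 1
      cases m with
      | zero => simp
      | succ k => simp only [Nat.succ_sub_one]; push_cast; ring
    simpa [pow_succ] using h2

lemma nat_cast_pred_mul (n : ℕ) : (n : ℂ) * ((n - 1 : ℕ) : ℂ) = (n : ℂ) ^ 2 - n := by
  cases n with
  | zero => simp
  | succ m => simp only [Nat.succ_sub_one]; push_cast; ring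

/-- Lemma 3: if the asymptotic characteristic function `h(φ) = -i ∂₁A(φ,φ)` is a
constant real number, then the variance grows only linearly in `n` (the walk
spreads classically). -/
theorem classical_spreading_of_constant_h
    (ρ A : ℝ × ℝ → ℂ)
    (hρ : ContDiff ℝ (⊤ : ℕ∞) ρ) (hA : ContDiff ℝ (⊤ : ℕ∞) A)
    (hρper₁ : ∀ x y, ρ (x + 2 * π, y) = ρ (x, y))
    (hρper₂ : ∀ x y, ρ (x, y + 2 * π) = ρ (x, y))
    (hAper₁ : ∀ x y, A (x + 2 * π, y) = A (x, y))
    (hAper₂ : ∀ x y, A (x, y + 2 * π) = A (x, y))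
    (hAdiag : ∀ φ, A (φ, φ) = 1)
    (hρnorm : (1 / (2 * π)) * ∫ φ in (0:ℝ)..(2 * π), ρ (φ, φ) = 1)
    -- the asymptotic characteristic function is a constant real number `c`
    (c : ℝ)
    (hconst : ∀ φ : ℝ, -Complex.I * deriv (fun x => A (x, φ)) φ = (c : ℂ))
    (M₁ M₂ : ℕ → ℂ)
    (hM₁ : ∀ n, M₁ n = (1 / (2 * π * Complex.I)) *
      ∫ φ in (0:ℝ)..(2 * π), deriv (fun x => ρ (x, φ) * A (x, φ) ^ n) φ)
    (hM₂ : ∀ n, M₂ n = (1 / (2 * π * Complex.I ^ 2)) *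
      ∫ φ in (0:ℝ)..(2 * π), iteratedDeriv 2 (fun x => ρ (x, φ) * A (x, φ) ^ n) φ) :
    ∃ K₃ : ℂ, ∀ n : ℕ,
      M₂ n - (M₁ n) ^ 2 = K₃ * n + (M₂ 0 - (M₁ 0) ^ 2) := by
  have hπ : (π : ℂ) ≠ 0 := Complex.ofReal_ne_zero.mpr Real.pi_ne_zero
  -- the first partial of A on the diagonal is I * c
  have hDA : ∀ φ : ℝ, pd A (φ, φ) = Complex.I * c := by
    intro φ
    have h := hconst φ
    rw [(hasDerivAt_slice hA φ φ).deriv] at h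
    have h2 : Complex.I * (-Complex.I * pd A (φ, φ)) = Complex.I * c := by rw [h]
    simpa [← mul_assoc, Complex.I_mul_I] using h2
  -- first derivative of the integrand
  have hg1 : ∀ (n : ℕ) (y x : ℝ), HasDerivAt (fun t => ρ (t, y) * A (t, y) ^ n)
      (pd ρ (x, y) * A (x, y) ^ n +
        ρ (x, y) * ((n : ℂ) * A (x, y) ^ (n - 1) * pd A (x, y))) x :=
    fun n y x => (hasDerivAt_slice hρ y x).mul ((hasDerivAt_slice hA y x).npow n)
  -- the normalization integral
  have hJρ : (∫ φ in (0:ℝ)..(2 * π), ρ (φ, φ)) = 2 * (π : ℂ) := by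
    have h := hρnorm
    field_simp at h
    linear_combination h
  -- abbreviations for the constant integrals
  set J1 : ℂ := ∫ φ in (0:ℝ)..(2 * π), pd ρ (φ, φ) with hJ1
  set J0 : ℂ := ∫ φ in (0:ℝ)..(2 * π), pd (pd ρ) (φ, φ) with hJ0
  set JA : ℂ := ∫ φ in (0:ℝ)..(2 * π), ρ (φ, φ) * pd (pd A) (φ, φ) with hJA
  set a : ℂ := (1 / (2 * π * Complex.I)) * J1 with ha
  set b : ℂ := (1 / (2 * π * Complex.I ^ 2)) * J0 with hb
  set d : ℂ := (1 / (2 * π * Complex.I ^ 2)) * (2 * Complex.I * c * J1 + JA) - (c : ℂ) ^ 2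
    with hd
  -- closed form for M₁
  have hM1' : ∀ n : ℕ, M₁ n = a + c * n := by
    intro n
    rw [hM₁ n]
    have hint : ∀ φ : ℝ, deriv (fun x => ρ (x, φ) * A (x, φ) ^ n) φ
        = pd ρ (φ, φ) + ((n : ℂ) * (Complex.I * c)) * ρ (φ, φ) := by
      intro φ
      rw [(hg1 n φ φ).deriv, hAdiag, hDA]
      ring
    rw [intervalIntegral.integral_congr (g := fun φ =>
        pd ρ (φ, φ) + ((n : ℂ) * (Complex.I * c)) * ρ (φ, φ)) (fun φ _ => hint φ)]
    rw [intervalIntegral.integral_add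
        ((cont_diag (pd_contDiff hρ).continuous).intervalIntegrable 0 (2 * π))
        (show IntervalIntegrable (fun φ : ℝ => ((n : ℂ) * (Complex.I * c)) * ρ (φ, φ)) volume 0
          (2 * π) from (continuous_const.mul (cont_diag hρ.continuous)).intervalIntegrable 0 (2 * π)),
      intervalIntegral.integral_const_mul, hJρ, ← hJ1, ha]
    field_simp
  -- closed form for M₂
  have hM2' : ∀ n : ℕ, M₂ n = b + d * n + (c : ℂ) ^ 2 * n ^ 2 := by
    intro n
    rw [hM₂ n]
    have hint : ∀ φ : ℝ, iteratedDeriv 2 (fun x => ρ (x, φ) * A (x, φ) ^ n) φ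
        = pd (pd ρ) (φ, φ) + (2 * (n : ℂ) * (Complex.I * c)) * pd ρ (φ, φ)
          + ((n : ℂ) * ((n - 1 : ℕ) : ℂ) * (Complex.I * c) ^ 2) * ρ (φ, φ)
          + (n : ℂ) * (ρ (φ, φ) * pd (pd A) (φ, φ)) := by
      intro φ
      rw [iteratedDeriv_succ, iteratedDeriv_one]
      have hE : deriv (fun x => ρ (x, φ) * A (x, φ) ^ n)
          = fun x => pd ρ (x, φ) * A (x, φ) ^ n +
              ρ (x, φ) * ((n : ℂ) * A (x, φ) ^ (n - 1) * pd A (x, φ)) :=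
        funext fun x => (hg1 n φ x).deriv
      rw [hE]
      have hD : HasDerivAt (fun x => pd ρ (x, φ) * A (x, φ) ^ n +
            ρ (x, φ) * ((n : ℂ) * A (x, φ) ^ (n - 1) * pd A (x, φ)))
          ((pd (pd ρ) (φ, φ) * A (φ, φ) ^ n +
              pd ρ (φ, φ) * ((n : ℂ) * A (φ, φ) ^ (n - 1) * pd A (φ, φ)))
            + (pd ρ (φ, φ) * ((n : ℂ) * A (φ, φ) ^ (n - 1) * pd A (φ, φ))
              + ρ (φ, φ) *
                ((0 * A (φ, φ) ^ (n - 1) +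
                    (n : ℂ) * (((n - 1 : ℕ) : ℂ) * A (φ, φ) ^ (n - 1 - 1) * pd A (φ, φ)))
                    * pd A (φ, φ)
                  + (n : ℂ) * A (φ, φ) ^ (n - 1) * pd (pd A) (φ, φ)))) φ :=
        ((hasDerivAt_slice (pd_contDiff hρ) φ φ).mul
            ((hasDerivAt_slice hA φ φ).npow n)).add
          ((hasDerivAt_slice hρ φ φ).mul
            (((hasDerivAt_const φ ((n : ℂ))).mul
                ((hasDerivAt_slice hA φ φ).npow (n - 1))).mul
              (hasDerivAt_slice (pd_contDiff hA) φ φ)))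
      rw [hD.deriv, hAdiag, hDA]
      simp only [one_pow]
      ring
    rw [intervalIntegral.integral_congr (g := fun φ =>
        pd (pd ρ) (φ, φ) + (2 * (n : ℂ) * (Complex.I * c)) * pd ρ (φ, φ)
          + ((n : ℂ) * ((n - 1 : ℕ) : ℂ) * (Complex.I * c) ^ 2) * ρ (φ, φ)
          + (n : ℂ) * (ρ (φ, φ) * pd (pd A) (φ, φ))) (fun φ _ => hint φ)]
    have i0 : IntervalIntegrable (fun φ : ℝ => pd (pd ρ) (φ, φ)) volume 0 (2 * π) :=
      (cont_diag (pd_contDiff (pd_contDiff hρ)).continuous).intervalIntegrable 0 (2 * π)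
    have i1 : IntervalIntegrable
        (fun φ : ℝ => (2 * (n : ℂ) * (Complex.I * c)) * pd ρ (φ, φ)) volume 0 (2 * π) :=
      (continuous_const.mul (cont_diag (pd_contDiff hρ).continuous)).intervalIntegrable 0 (2 * π)
    have i2 : IntervalIntegrable
        (fun φ : ℝ => ((n : ℂ) * ((n - 1 : ℕ) : ℂ) * (Complex.I * c) ^ 2) * ρ (φ, φ))
        volume 0 (2 * π) :=
      (continuous_const.mul (cont_diag hρ.continuous)).intervalIntegrable 0 (2 * π)
    have i3 : IntervalIntegrable
        (fun φ : ℝ => (n : ℂ) * (ρ (φ, φ) * pd (pd A) (φ, φ))) volume 0 (2 * π) :=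
      (continuous_const.mul ((cont_diag hρ.continuous).mul
        (cont_diag (pd_contDiff (pd_contDiff hA)).continuous))).intervalIntegrable 0 (2 * π)
    rw [intervalIntegral.integral_add ((i0.add i1).add i2) i3,
      intervalIntegral.integral_add (i0.add i1) i2,
      intervalIntegral.integral_add i0 i1,
      intervalIntegral.integral_const_mul, intervalIntegral.integral_const_mul,
      intervalIntegral.integral_const_mul, hJρ, ← hJ1, ← hJ0, ← hJA,
      nat_cast_pred_mul n, hb, hd]
    field_simp
    linear_combination
  refine ⟨d - 2 * a * c, fun n => ?_⟩
  rw [hM2' n, hM1' n, hM2' 0, hM1' 0]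
  push_cast
  ring
end

section
/- Let U be a 2×2 complex unitary matrix, σ₃ = !![1, 0; 0, −1], V(φ) = exp(iφσ₃)·U, σ = U†σ₃U, and let ρ_c be a 2×2 positive semidefinite complex matrix of trace 1. For an integer k ≥ 1 define h(φ) = Tr[(Σ_{j=0}^{k−1} (V(φ)†)^j σ V(φ)^j) ρ_c]. Then h(φ) is real for every φ, and there exist real numbers c₀ and a_m, b_m for 1 ≤ m ≤ k−1 such that for all φ ∈ ℝ, h(φ) = c₀ + Σ_{m=1}^{k−1} (a_m cos(2mφ) + b_m sin(2mφ)); i.e. h is a real trigonometric polynomial containing only even frequencies up to 2(k−1). -/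
open Matrix Real
open scoped ComplexOrder

/-- The third Pauli matrix. -/
noncomputable def pauli3 : Matrix (Fin 2) (Fin 2) ℂ := !![1, 0; 0, -1]

/-- The coin evolution matrix `V(φ) = exp(iφσ₃)·U` of the ε_{V^k} walk. -/
noncomputable def coinV (U : Matrix (Fin 2) (Fin 2) ℂ) (φ : ℝ) :
    Matrix (Fin 2) (Fin 2) ℂ :=
  NormedSpace.exp ((Complex.I * (φ : ℂ)) • pauli3) * U

/-- The asymptotic characteristic function
`h(φ) = Tr[(Σ_{j<k} (V(φ)†)^j σ V(φ)^j) ρ_c]`, with `σ = U†σ₃U`. -/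
noncomputable def asympChar (U ρc : Matrix (Fin 2) (Fin 2) ℂ) (k : ℕ) (φ : ℝ) : ℂ :=
  ((∑ j ∈ Finset.range k,
      ((coinV U φ)ᴴ) ^ j * (Uᴴ * pauli3 * U) * (coinV U φ) ^ j) * ρc).trace

set_option linter.unnecessarySeqFocus false


/-- `f` is a trig polynomial with frequencies `e^{2niφ}` for `n ∈ [a,b]`. -/
def TP (a b : ℤ) (f : ℝ → ℂ) : Prop :=
  ∃ c : ℤ → ℂ, ∀ φ : ℝ,
    f φ = ∑ n ∈ Finset.Icc a b, c n * Complex.exp (2 * n * Complex.I * φ)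

namespace TP

lemma mono {a b a' b' : ℤ} {f : ℝ → ℂ} (ha : a' ≤ a) (hb : b ≤ b')
    (h : TP a b f) : TP a' b' f := by
  obtain ⟨c, hc⟩ := h
  refine ⟨fun n => if n ∈ Finset.Icc a b then c n else 0, fun φ => ?_⟩
  rw [hc φ]
  rw [← Finset.sum_subset (Finset.Icc_subset_Icc ha hb)
    (fun n _ hn => by simp [hn])]
  exact Finset.sum_congr rfl fun n hn => by simp [hn]

lemma zero (a b : ℤ) : TP a b (fun _ => 0) :=
  ⟨fun _ => 0, fun φ => by simp⟩

lemma const (z : ℂ) : TP 0 0 (fun _ => z) :=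
  ⟨fun _ => z, fun φ => by simp⟩

lemma add {a b : ℤ} {f g : ℝ → ℂ} (hf : TP a b f) (hg : TP a b g) :
    TP a b (fun φ => f φ + g φ) := by
  obtain ⟨c, hc⟩ := hf; obtain ⟨d, hd⟩ := hg
  exact ⟨fun n => c n + d n, fun φ => by
    simp [hc φ, hd φ, add_mul, Finset.sum_add_distrib]⟩

lemma finsetSum {ι : Type*} {a b : ℤ} (s : Finset ι) {f : ι → ℝ → ℂ}
    (h : ∀ i ∈ s, TP a b (f i)) : TP a b (fun φ => ∑ i ∈ s, f i φ) := by
  classical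
  induction s using Finset.cons_induction with
  | empty => simpa using zero a b
  | cons i s hi ih =>
      have := add (h i (Finset.mem_cons_self i s))
        (ih fun j hj => h j (Finset.mem_cons.2 (Or.inr hj)))
      simpa [Finset.sum_insert hi] using this

lemma mul {a b a' b' : ℤ} {f g : ℝ → ℂ} (hf : TP a b f) (hg : TP a' b' g) :
    TP (a + a') (b + b') (fun φ => f φ * g φ) := by
  obtain ⟨c, hc⟩ := hf; obtain ⟨d, hd⟩ := hg
  set d' : ℤ → ℂ := fun m => if m ∈ Finset.Icc a' b' then d m else 0 with hd'
  refine ⟨fun p => ∑ n ∈ Finset.Icc a b, c n * d' (p - n), fun φ => ?_⟩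
  show f φ * g φ = _
  rw [hc φ, hd φ, Finset.sum_mul_sum]
  have key : ∀ n ∈ Finset.Icc a b,
      ∑ m ∈ Finset.Icc a' b',
        c n * Complex.exp (2 * n * Complex.I * φ) *
          (d m * Complex.exp (2 * m * Complex.I * φ)) =
      ∑ p ∈ Finset.Icc (a + a') (b + b'),
        c n * d' (p - n) * Complex.exp (2 * p * Complex.I * φ) := by
    intro n hn
    rw [Finset.mem_Icc] at hn
    calc ∑ m ∈ Finset.Icc a' b',
          c n * Complex.exp (2 * n * Complex.I * φ) *
            (d m * Complex.exp (2 * m * Complex.I * φ))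
        = ∑ p ∈ (Finset.Icc a' b').map (addLeftEmbedding n),
            c n * d' (p - n) * Complex.exp (2 * p * Complex.I * φ) := by
          rw [Finset.sum_map]
          refine Finset.sum_congr rfl fun m hm => ?_
          simp only [addLeftEmbedding_apply]
          have h1 : d' (n + m - n) = d m := by
            simp only [hd', add_sub_cancel_left]
            rw [if_pos hm]
          have h2 : Complex.exp (2 * (n:ℂ) * Complex.I * φ) *
              Complex.exp (2 * (m:ℂ) * Complex.I * φ) =
              Complex.exp (2 * ((n + m : ℤ):ℂ) * Complex.I * φ) := by
            rw [← Complex.exp_add]; congr 1; push_cast; ring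
          rw [h1, ← h2]; ring
      _ = ∑ p ∈ Finset.Icc (a + a') (b + b'),
            c n * d' (p - n) * Complex.exp (2 * p * Complex.I * φ) := by
          refine Finset.sum_subset ?_ ?_
          · intro p hp
            simp only [Finset.mem_map, addLeftEmbedding_apply] at hp
            obtain ⟨m, hm, rfl⟩ := hp
            rw [Finset.mem_Icc] at hm ⊢
            omega
          · intro p _ hp
            have hmem : p - n ∉ Finset.Icc a' b' := fun hmem =>
              hp (Finset.mem_map.2 ⟨p - n, hmem, by
                simp only [addLeftEmbedding_apply]; ring⟩)
            simp only [hd']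
            rw [if_neg hmem, mul_zero, zero_mul]
  rw [Finset.sum_congr rfl key, Finset.sum_comm]
  refine Finset.sum_congr rfl fun p _ => ?_
  rw [Finset.sum_mul]

lemma single (n : ℤ) (z : ℂ) :
    TP n n (fun φ => z * Complex.exp (2 * n * Complex.I * φ)) :=
  ⟨fun _ => z, fun φ => by rw [Finset.Icc_self, Finset.sum_singleton]⟩

lemma conj {a b : ℤ} {f : ℝ → ℂ} (hf : TP a b f) :
    TP (-b) (-a) (fun φ => (starRingEnd ℂ) (f φ)) := by
  obtain ⟨c, hc⟩ := hf
  refine ⟨fun n => (starRingEnd ℂ) (c (-n)), fun φ => ?_⟩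
  show (starRingEnd ℂ) (f φ) = _
  rw [hc φ, map_sum]
  refine Finset.sum_nbij' (fun n => -n) (fun n => -n) ?_ ?_ ?_ ?_ ?_
  · intro n hn; simp only [Finset.mem_Icc] at hn ⊢; omega
  · intro n hn; simp only [Finset.mem_Icc] at hn ⊢; omega
  · intro n _; simp
  · intro n _; simp
  · intro n _
    dsimp only
    rw [_root_.map_mul, neg_neg]
    congr 1
    rw [← Complex.exp_conj]
    congr 1
    simp only [_root_.map_mul, Complex.conj_I, map_ofNat, map_intCast, Complex.conj_ofReal]
    push_cast
    ring

end TP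

section MatrixPart

open Complex

/-- The phase-stripped coin matrix `A(φ) = diag(1, e^{-2iφ})·U`. -/
noncomputable def stripA (U : Matrix (Fin 2) (Fin 2) ℂ) (φ : ℝ) :
    Matrix (Fin 2) (Fin 2) ℂ :=
  Matrix.diagonal ![1, Complex.exp (-(2 * Complex.I * φ))] * U

lemma stripA_entry_TP (U : Matrix (Fin 2) (Fin 2) ℂ) (p q : Fin 2) :
    TP (-1) 0 (fun φ => stripA U φ p q) := by
  fin_cases p
  · refine TP.mono (by norm_num) le_rfl (a := 0) (b := 0) ?_
    convert TP.const (U 0 q) using 1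
    funext φ
    simp [stripA, Matrix.diagonal_mul]
  · refine TP.mono le_rfl (by norm_num) (a := -1) (b := -1) ?_
    convert TP.single (-1) (U 1 q) using 1
    funext φ
    simp only [stripA, Matrix.diagonal_mul]
    show Complex.exp (-(2 * Complex.I * φ)) * U 1 q = _
    rw [mul_comm]
    congr 2
    push_cast
    ring

lemma stripA_pow_entry_TP (U : Matrix (Fin 2) (Fin 2) ℂ) (j : ℕ) (p q : Fin 2) :
    TP (-(j : ℤ)) 0 (fun φ => ((stripA U φ) ^ j) p q) := by
  induction j generalizing p q with
  | zero =>
      simp only [pow_zero, Nat.cast_zero, neg_zero]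
      convert TP.const ((1 : Matrix (Fin 2) (Fin 2) ℂ) p q) using 1
  | succ j ih =>
      have heq : (fun φ => ((stripA U φ) ^ (j + 1)) p q) =
          fun φ => ∑ r : Fin 2, ((stripA U φ) ^ j) p r * stripA U φ r q := by
        funext φ
        rw [pow_succ, Matrix.mul_apply]
      rw [heq]
      refine TP.finsetSum _ fun r _ => ?_
      have h := TP.mul (ih p r) (stripA_entry_TP U r q)
      refine TP.mono ?_ ?_ h <;> push_cast <;> omega

end MatrixPart

lemma pauli3_diag : pauli3 = Matrix.diagonal ![1, -1] := by
  ext i j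
  fin_cases i <;> fin_cases j <;> simp [pauli3, Matrix.diagonal]

lemma pauli3_herm : pauli3ᴴ = pauli3 := by
  ext i j
  fin_cases i <;> fin_cases j <;> simp [pauli3]

lemma coinV_eq (U : Matrix (Fin 2) (Fin 2) ℂ) (φ : ℝ) :
    coinV U φ = Complex.exp (Complex.I * φ) • stripA U φ := by
  have hv : NormedSpace.exp ((Complex.I * (φ:ℂ)) • ![(1:ℂ), -1]) =
      Complex.exp (Complex.I * φ) • ![(1:ℂ), Complex.exp (-(2 * Complex.I * φ))] := by
    funext i
    fin_cases i <;>
      simp only [Pi.coe_exp, Pi.smul_apply, Matrix.cons_val_zero, Matrix.cons_val_one,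
        Matrix.head_cons, smul_eq_mul, ← Complex.exp_eq_exp_ℂ]
    · show Complex.exp (Complex.I * φ * 1) = Complex.exp (Complex.I * φ) * 1
      rw [mul_one, mul_one]
    · show Complex.exp (Complex.I * φ * -1) =
        Complex.exp (Complex.I * φ) * Complex.exp (-(2 * Complex.I * φ))
      rw [← Complex.exp_add]
      congr 1
      ring
  rw [coinV, stripA, pauli3_diag, ← Matrix.diagonal_smul, Matrix.exp_diagonal, hv,
    Matrix.diagonal_smul, smul_mul_assoc]

lemma TP.mulBound {a b a' b' A B : ℤ} {f g : ℝ → ℂ} (hf : TP a b f) (hg : TP a' b' g)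
    (h1 : A ≤ a + a') (h2 : b + b' ≤ B) : TP A B (fun φ => f φ * g φ) :=
  TP.mono h1 h2 (TP.mul hf hg)

lemma term_eq (U : Matrix (Fin 2) (Fin 2) ℂ) (φ : ℝ) (j : ℕ) :
    ((coinV U φ)ᴴ) ^ j * (Uᴴ * pauli3 * U) * (coinV U φ) ^ j =
      ((stripA U φ)ᴴ) ^ j * (Uᴴ * pauli3 * U) * (stripA U φ) ^ j := by
  have hz : star (Complex.exp (Complex.I * φ)) * Complex.exp (Complex.I * φ) = 1 := by
    rw [← starRingEnd_apply, ← Complex.exp_conj, ← Complex.exp_add]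
    have : (starRingEnd ℂ) (Complex.I * φ) + Complex.I * φ = 0 := by
      simp only [_root_.map_mul, Complex.conj_I, Complex.conj_ofReal]
      ring
    rw [this, Complex.exp_zero]
  rw [coinV_eq, Matrix.conjTranspose_smul, smul_pow, smul_pow, smul_mul_assoc,
    Matrix.smul_mul, Matrix.mul_smul, smul_smul, ← mul_pow, hz, one_pow, one_smul]

lemma asympChar_strip (U ρc : Matrix (Fin 2) (Fin 2) ℂ) (k : ℕ) (φ : ℝ) :
    asympChar U ρc k φ =
      ((∑ j ∈ Finset.range k,
        ((stripA U φ)ᴴ) ^ j * (Uᴴ * pauli3 * U) * (stripA U φ) ^ j) * ρc).trace := by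
  rw [asympChar]
  congr 2
  exact Finset.sum_congr rfl fun j _ => term_eq U φ j

lemma sum_Icc_split (N : ℕ) (g : ℤ → ℝ) :
    ∑ n ∈ Finset.Icc (-(N:ℤ)) (N:ℤ), g n
      = g 0 + ∑ m ∈ Finset.Icc 1 N, (g (m:ℤ) + g (-(m:ℤ))) := by
  induction N with
  | zero => simp
  | succ N ih =>
      have h1 : Finset.Icc (-((N+1:ℕ)):ℤ) (((N+1:ℕ)):ℤ)
          = insert (-((N+1:ℕ)):ℤ) (insert (((N+1:ℕ)):ℤ)
              (Finset.Icc (-(N:ℕ):ℤ) ((N:ℕ):ℤ))) := by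
        ext n
        simp only [Finset.mem_insert, Finset.mem_Icc]
        push_cast
        omega
      rw [h1, Finset.sum_insert, Finset.sum_insert, ih,
        Finset.sum_Icc_succ_top (by omega : 1 ≤ N + 1)]
      · push_cast
        ring
      · simp only [Finset.mem_Icc]
        push_cast
        omega
      · simp only [Finset.mem_insert, Finset.mem_Icc]
        push_cast
        omega

lemma asympChar_real (U ρc : Matrix (Fin 2) (Fin 2) ℂ) (hρ : ρcᴴ = ρc) (k : ℕ) (φ : ℝ) :
    (starRingEnd ℂ) (asympChar U ρc k φ) = asympChar U ρc k φ := by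
  rw [asympChar]
  set H := ∑ j ∈ Finset.range k,
    ((coinV U φ)ᴴ) ^ j * (Uᴴ * pauli3 * U) * (coinV U φ) ^ j with hH
  have hHh : Hᴴ = H := by
    rw [hH, Matrix.conjTranspose_sum]
    refine Finset.sum_congr rfl fun j _ => ?_
    simp [Matrix.conjTranspose_mul, Matrix.conjTranspose_pow,
      Matrix.conjTranspose_conjTranspose, pauli3_herm, Matrix.mul_assoc]
  calc (starRingEnd ℂ) (H * ρc).trace = ((H * ρc)ᴴ).trace :=
        (Matrix.trace_conjTranspose _).symm
    _ = (ρcᴴ * Hᴴ).trace := by rw [Matrix.conjTranspose_mul]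
    _ = (ρc * H).trace := by rw [hρ, hHh]
    _ = (H * ρc).trace := Matrix.trace_mul_comm _ _

/-- The asymptotic characteristic function of the ε_{V^k} walk is a real
trigonometric polynomial containing only even frequencies up to `2(k-1)`. -/
theorem asympChar_is_even_trig_poly
    (U : Matrix (Fin 2) (Fin 2) ℂ) (hU : Uᴴ * U = 1) (hU' : U * Uᴴ = 1)
    (ρc : Matrix (Fin 2) (Fin 2) ℂ) (hρc : ρc.PosSemidef) (htr : ρc.trace = 1)
    (k : ℕ) (hk : 1 ≤ k) :
    (∀ φ : ℝ, (asympChar U ρc k φ).im = 0) ∧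
    ∃ (c₀ : ℝ) (a b : ℕ → ℝ), ∀ φ : ℝ,
      asympChar U ρc k φ =
        ((c₀ + ∑ m ∈ Finset.Icc 1 (k - 1),
          (a m * cos (2 * m * φ) + b m * sin (2 * m * φ)) : ℝ) : ℂ) := by
  have him : ∀ φ : ℝ, (asympChar U ρc k φ).im = 0 := fun φ =>
    Complex.conj_eq_iff_im.mp (asympChar_real U ρc hρc.1.eq k φ)
  refine ⟨him, ?_⟩
  set N : ℕ := k - 1 with hN
  have hTP : TP (-(N:ℤ)) (N:ℤ) (asympChar U ρc k) := by
    have hshape : asympChar U ρc k = fun φ =>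
        ∑ j ∈ Finset.range k, ∑ p : Fin 2, ∑ r : Fin 2,
          (∑ t : Fin 2, (∑ s : Fin 2,
              (starRingEnd ℂ) ((stripA U φ ^ j) s p) * (Uᴴ * pauli3 * U) s t) *
            (stripA U φ ^ j) t r) * ρc r p := by
      funext φ
      rw [asympChar_strip, Matrix.sum_mul, Matrix.trace_sum]
      refine Finset.sum_congr rfl fun j _ => ?_
      rw [Matrix.trace]
      simp only [Matrix.diag_apply, Matrix.mul_apply, ← Matrix.conjTranspose_pow,
        Matrix.conjTranspose_apply, starRingEnd_apply]
    rw [hshape]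
    refine TP.finsetSum _ fun j hj => ?_
    have hjN : (j : ℤ) ≤ (N : ℤ) := by
      rw [Finset.mem_range] at hj
      omega
    refine TP.finsetSum _ fun p _ => ?_
    refine TP.finsetSum _ fun r _ => ?_
    refine TP.mulBound (a := -(j:ℤ)) (b := (j:ℤ)) ?_ (TP.const (ρc r p))
      (by omega) (by omega)
    refine TP.finsetSum _ fun t _ => ?_
    refine TP.mulBound (a := 0) (b := (j:ℤ)) ?_ (stripA_pow_entry_TP U j t r)
      (by omega) (by omega)
    refine TP.finsetSum _ fun s _ => ?_
    exact TP.mulBound (TP.conj (stripA_pow_entry_TP U j s p))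
      (TP.const ((Uᴴ * pauli3 * U) s t)) (by omega) (by omega)
  obtain ⟨c, hc⟩ := hTP
  refine ⟨(c 0).re, fun m => (c m).re + (c (-(m:ℤ))).re,
    fun m => -(c m).im + (c (-(m:ℤ))).im, fun φ => ?_⟩
  have h1 : asympChar U ρc k φ = (((asympChar U ρc k φ).re : ℝ) : ℂ) := by
    apply Complex.ext
    · rfl
    · simp [him φ]
  have h2 : (asympChar U ρc k φ).re =
      ∑ n ∈ Finset.Icc (-(N:ℤ)) (N:ℤ),
        ((c n).re * Real.cos (2 * n * φ) - (c n).im * Real.sin (2 * n * φ)) := by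
    rw [hc φ, Complex.re_sum]
    refine Finset.sum_congr rfl fun n _ => ?_
    have harg : (2:ℂ) * (n:ℂ) * Complex.I * (φ:ℂ) = ((2 * (n:ℝ) * φ : ℝ) : ℂ) * Complex.I := by
      push_cast
      ring
    rw [harg, Complex.exp_mul_I, ← Complex.ofReal_cos, ← Complex.ofReal_sin]
    simp only [Complex.mul_re, Complex.mul_im, Complex.add_re, Complex.add_im,
      Complex.ofReal_re, Complex.ofReal_im, Complex.I_re, Complex.I_im]
    ring
  rw [h1, h2, sum_Icc_split]
  congr 1
  have hg0 : (c 0).re * Real.cos (2 * ((0:ℤ):ℝ) * φ) -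
      (c 0).im * Real.sin (2 * ((0:ℤ):ℝ) * φ) = (c 0).re := by
    norm_num
  rw [hg0]
  congr 1
  refine Finset.sum_congr rfl fun m hm => ?_
  have hneg : 2 * ((-(m:ℤ) : ℤ):ℝ) * φ = -(2 * (m:ℝ) * φ) := by
    push_cast
    ring
  have hpos : 2 * (((m:ℤ)):ℝ) * φ = 2 * (m:ℝ) * φ := by push_cast; ring
  rw [hneg, hpos, Real.cos_neg, Real.sin_neg]
  ring
end
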